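/- Let K_n be the complete graph on n vertices with n ≥ 4. Then the toric ideal I_{K_n} has no indispensable binomials: for every binomial B ∈ I_{K_n} there exists a system of binomial generators of I_{K_n} containing neither B nor −B. -/
import Mathlib


open MvPolynomial

noncomputable section

/-- The exponent of the variable `t j` in the image of `x i`: it is `1` if the vertex `j`
is an endpoint of the edge `e i`, and `0` otherwise (incidence vector of the edge `e i`). -/
def incid {n m : ℕ} (e : Fin m → Sym2 (Fin n)) (i : Fin m) (j : Fin n) : ℕ :=
  if j ∈ e i then 1 else 0

/-- The `K`-algebra homomorphism `K[x_1,…,x_m] → K[t_1,…,t_n]` sending `x i` to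
`t_j t_k`, where `e i = {v_j, v_k}`. -/
def toricMap (K : Type*) [CommRing K] {n m : ℕ} (e : Fin m → Sym2 (Fin n)) :
    MvPolynomial (Fin m) K →ₐ[K] MvPolynomial (Fin n) K :=
  aeval fun i => ∏ j, X j ^ incid e i j

/-- The toric ideal `I_G` of the graph with edges `e`. -/
def toricIdeal (K : Type*) [CommRing K] {n m : ℕ} (e : Fin m → Sym2 (Fin n)) :
    Ideal (MvPolynomial (Fin m) K) :=
  RingHom.ker (toricMap K e)

/-- A binomial is a difference of two monomials. -/
def IsBinomial {K : Type*} [CommRing K] {σ : Type*} (p : MvPolynomial σ K) : Prop :=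
  ∃ u v : σ →₀ ℕ, p = monomial u 1 - monomial v 1

def Adeg {n m : ℕ} (e : Fin m → Sym2 (Fin n)) (u : Fin m →₀ ℕ) : Fin n →₀ ℕ :=
  Finsupp.equivFunOnFinite.symm fun j => ∑ i, u i * incid e i j

lemma Adeg_apply {n m : ℕ} (e : Fin m → Sym2 (Fin n)) (u : Fin m →₀ ℕ) (j : Fin n) :
    Adeg e u j = ∑ i, u i * incid e i j := rfl

lemma symm_apply {α M : Type*} [Finite α] [Zero M] (g : α → M) (a : α) :
    (Finsupp.equivFunOnFinite.symm g) a = g a := rfl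

lemma prod_X_pow_univ {K : Type*} [CommRing K] {n : ℕ} (d : Fin n → ℕ) :
    (∏ j, (X j : MvPolynomial (Fin n) K) ^ d j) =
      monomial (Finsupp.equivFunOnFinite.symm d) 1 := by
  rw [← prod_X_pow_eq_monomial]
  refine (Finset.prod_subset (Finset.subset_univ _) ?_).symm
  intro x _ hx
  have : d x = 0 := Finsupp.notMem_support_iff.mp hx
  rw [this, pow_zero]

lemma monomial_finsuppProd {σ τ K : Type*} [CommRing K] (u : τ →₀ ℕ) (W : τ → ℕ → (σ →₀ ℕ)) :
    (u.prod fun i k => monomial (W i k) (1 : K)) = monomial (u.sum W) 1 := by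
  classical
  rw [Finsupp.prod, Finsupp.sum]
  induction u.support using Finset.cons_induction with
  | empty => simp
  | cons a s ha ih => rw [Finset.prod_cons, Finset.sum_cons, ih, monomial_mul, one_mul]

lemma toricMap_monomial {K : Type*} [CommRing K] {n m : ℕ} (e : Fin m → Sym2 (Fin n))
    (u : Fin m →₀ ℕ) (c : K) :
    toricMap K e (monomial u c) = monomial (Adeg e u) c := by
  rw [toricMap, aeval_monomial]
  have h1 : ∀ i : Fin m, ∀ k : ℕ,
      (∏ j, (X j : MvPolynomial (Fin n) K) ^ incid e i j) ^ k =
        monomial (k • Finsupp.equivFunOnFinite.symm fun j => incid e i j) 1 := by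
    intro i k
    rw [prod_X_pow_univ, monomial_pow, one_pow]
  simp only [h1]
  rw [monomial_finsuppProd]
  have h2 : (u.sum fun i k => k • Finsupp.equivFunOnFinite.symm fun j => incid e i j)
      = Adeg e u := by
    ext j
    rw [Finsupp.sum_apply, Finsupp.sum_fintype _ _ (by intro i; simp), Adeg_apply]
    refine Finset.sum_congr rfl fun i _ => ?_
    rw [Finsupp.smul_apply, symm_apply, smul_eq_mul]
  rw [h2]
  rw [show (algebraMap K (MvPolynomial (Fin n) K)) c = C c from rfl, C_mul_monomial, mul_one]

lemma coeff_toricMap {K : Type*} [CommRing K] {n m : ℕ} (e : Fin m → Sym2 (Fin n))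
    (f : MvPolynomial (Fin m) K) (d : Fin n →₀ ℕ) :
    coeff d (toricMap K e f) = ∑ w ∈ f.support.filter (fun w => Adeg e w = d), coeff w f := by
  classical
  conv_lhs => rw [f.as_sum, map_sum, coeff_sum]
  rw [Finset.sum_filter]
  refine Finset.sum_congr rfl fun w _ => ?_
  rw [toricMap_monomial, coeff_monomial]

section Comb

variable {n m : ℕ} (e : Fin m → Sym2 (Fin n))

lemma edge_nondiag (hrange : Set.range e = {s : Sym2 (Fin n) | ¬ s.IsDiag}) (i : Fin m) :
    ¬ (e i).IsDiag := by
  have : e i ∈ Set.range e := ⟨i, rfl⟩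
  rw [hrange] at this
  exact this

lemma edge_decomp (hrange : Set.range e = {s : Sym2 (Fin n) | ¬ s.IsDiag}) (i : Fin m) :
    ∃ a b : Fin n, a ≠ b ∧ e i = s(a, b) := by
  have hd := edge_nondiag e hrange i
  obtain ⟨a, b, hab⟩ : ∃ a b : Fin n, e i = s(a, b) :=
    Sym2.ind (fun x y => ⟨x, y, rfl⟩) (e i)
  refine ⟨a, b, fun h => hd ?_, hab⟩
  rw [hab, Sym2.mk_isDiag_iff]
  exact h

lemma exists_opposite {u v : Fin m →₀ ℕ} (hA : Adeg e u = Adeg e v) {j : Fin n} {i₀ : Fin m}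
    (hj : j ∈ e i₀) (hlt : v i₀ < u i₀) : ∃ i₁, j ∈ e i₁ ∧ u i₁ < v i₁ := by
  by_contra h
  push_neg at h
  have hAj : Adeg e u j = Adeg e v j := by rw [hA]
  rw [Adeg_apply, Adeg_apply] at hAj
  have hlt' : ∑ i, v i * incid e i j < ∑ i, u i * incid e i j := by
    apply Finset.sum_lt_sum
    · intro i _
      by_cases hmem : j ∈ e i
      · simpa [incid, hmem] using h i hmem
      · simp [incid, hmem]
    · exact ⟨i₀, Finset.mem_univ _, by simpa [incid, hj] using hlt⟩
  omega

lemma point_adjust {m : ℕ} {i₁ i₂ i₃ i₄ : Fin m} {u : Fin m → ℕ}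
    (n13 : i₁ ≠ i₃) (n14 : i₁ ≠ i₄) (n23 : i₂ ≠ i₃) (n24 : i₂ ≠ i₄) (n12 : i₁ ≠ i₂)
    (hu₁ : 0 < u i₁) (hu₂ : 0 < u i₂) (i : Fin m) :
    (u i + (if i = i₃ then 1 else 0) + (if i = i₄ then 1 else 0)
      - (if i = i₁ then 1 else 0) - (if i = i₂ then 1 else 0))
      + ((if i = i₁ then 1 else 0) + (if i = i₂ then 1 else 0)) =
    u i + ((if i = i₃ then 1 else 0) + (if i = i₄ then 1 else 0)) := by
  by_cases e1 : i = i₁ <;> by_cases e2 : i = i₂ <;> by_cases e3 : i = i₃ <;>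
    by_cases e4 : i = i₄ <;> simp_all <;> omega

lemma incid_swap {n m : ℕ} (e : Fin m → Sym2 (Fin n)) {i₁ i₂ i₃ i₄ : Fin m} {a b c d : Fin n}
    (h₁ : e i₁ = s(a, b)) (h₂ : e i₂ = s(c, d)) (h₃ : e i₃ = s(a, c)) (h₄ : e i₄ = s(b, d))
    (hab : a ≠ b) (hac : a ≠ c) (had : a ≠ d) (hbc : b ≠ c) (hbd : b ≠ d) (hcd : c ≠ d)
    (j : Fin n) : incid e i₁ j + incid e i₂ j = incid e i₃ j + incid e i₄ j := by
  simp only [incid, h₁, h₂, h₃, h₄, Sym2.mem_iff]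
  by_cases ja : j = a <;> by_cases jb : j = b <;> by_cases jc : j = c <;>
    by_cases jd : j = d <;> simp_all

lemma swap_construct {n m : ℕ} (e : Fin m → Sym2 (Fin n)) (he : Function.Injective e)
    (hrange : Set.range e = {s : Sym2 (Fin n) | ¬ s.IsDiag})
    {u : Fin m →₀ ℕ} {i₁ i₂ : Fin m} {a b c d : Fin n}
    (h₁ : e i₁ = s(a, b)) (h₂ : e i₂ = s(c, d))
    (hab : a ≠ b) (hac : a ≠ c) (had : a ≠ d) (hbc : b ≠ c) (hbd : b ≠ d) (hcd : c ≠ d)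
    (hu₁ : 0 < u i₁) (hu₂ : 0 < u i₂) :
    ∃ w₁ w₂ : Fin m →₀ ℕ, w₁ ≠ w₂ ∧ w₁ ≠ u ∧ w₂ ≠ u ∧
      Adeg e w₁ = Adeg e u ∧ Adeg e w₂ = Adeg e u := by
  classical
  have hmem : ∀ x y : Fin n, x ≠ y → ∃ i, e i = s(x, y) := by
    intro x y hxy
    have : s(x, y) ∈ Set.range e := by
      rw [hrange]; simpa [Sym2.mk_isDiag_iff] using hxy
    exact this
  obtain ⟨i₃, h₃⟩ := hmem a c hac
  obtain ⟨i₄, h₄⟩ := hmem b d hbd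
  obtain ⟨i₅, h₅⟩ := hmem a d had
  obtain ⟨i₆, h₆⟩ := hmem b c hbc
  have key : ∀ {i i' : Fin m} {x y z w : Fin n}, e i = s(x, y) → e i' = s(z, w) →
      ¬((x = z ∧ y = w) ∨ (x = w ∧ y = z)) → i ≠ i' := by
    intro i i' x y z w hi hi' hne hii
    apply hne
    rw [← Sym2.eq_iff, ← hi, ← hi', hii]
  have ne12 : i₁ ≠ i₂ := key h₁ h₂ (by tauto)
  have ne13 : i₁ ≠ i₃ := key h₁ h₃ (by tauto)
  have ne14 : i₁ ≠ i₄ := key h₁ h₄ (by tauto)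
  have ne15 : i₁ ≠ i₅ := key h₁ h₅ (by tauto)
  have ne16 : i₁ ≠ i₆ := key h₁ h₆ (by tauto)
  have ne23 : i₂ ≠ i₃ := key h₂ h₃ (by tauto)
  have ne24 : i₂ ≠ i₄ := key h₂ h₄ (by tauto)
  have ne25 : i₂ ≠ i₅ := key h₂ h₅ (by tauto)
  have ne26 : i₂ ≠ i₆ := key h₂ h₆ (by tauto)
  have ne34 : i₃ ≠ i₄ := key h₃ h₄ (by tauto)
  have ne35 : i₃ ≠ i₅ := key h₃ h₅ (by tauto)
  have ne36 : i₃ ≠ i₆ := key h₃ h₆ (by tauto)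
  have ne56 : i₅ ≠ i₆ := key h₅ h₆ (by tauto)
  have sum_delta : ∀ (i₀ : Fin m) (j : Fin n),
      (∑ i, (if i = i₀ then 1 else 0) * incid e i j) = incid e i₀ j := by
    intro i₀ j
    rw [Finset.sum_eq_single i₀]
    · simp
    · intro i _ hne; simp [hne]
    · intro h; exact absurd (Finset.mem_univ _) h
  have hAdeg : ∀ (w : Fin m →₀ ℕ) (iₓ i_y : Fin m),
      (∀ i, w i + ((if i = i₁ then 1 else 0) + (if i = i₂ then 1 else 0)) =
        u i + ((if i = iₓ then 1 else 0) + (if i = i_y then 1 else 0))) →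
      (∀ j, incid e i₁ j + incid e i₂ j = incid e iₓ j + incid e i_y j) →
      Adeg e w = Adeg e u := by
    intro w iₓ i_y hkey hinc
    ext j
    have hcongr : ∑ i, (w i + ((if i = i₁ then 1 else 0) + (if i = i₂ then 1 else 0))) * incid e i j
        = ∑ i, (u i + ((if i = iₓ then 1 else 0) + (if i = i_y then 1 else 0))) * incid e i j :=
      Finset.sum_congr rfl fun i _ => by rw [hkey i]
    simp only [add_mul] at hcongr
    rw [Finset.sum_add_distrib, Finset.sum_add_distrib, Finset.sum_add_distrib,
      Finset.sum_add_distrib, sum_delta, sum_delta, sum_delta, sum_delta] at hcongr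
    have h2 := hinc j
    rw [Adeg_apply, Adeg_apply]
    omega
  set w₁ : Fin m →₀ ℕ := Finsupp.equivFunOnFinite.symm (fun i =>
      u i + (if i = i₃ then 1 else 0) + (if i = i₄ then 1 else 0)
      - (if i = i₁ then 1 else 0) - (if i = i₂ then 1 else 0)) with hw₁def
  set w₂ : Fin m →₀ ℕ := Finsupp.equivFunOnFinite.symm (fun i =>
      u i + (if i = i₅ then 1 else 0) + (if i = i₆ then 1 else 0)
      - (if i = i₁ then 1 else 0) - (if i = i₂ then 1 else 0)) with hw₂def
  have hw₁app : ∀ i, w₁ i = u i + (if i = i₃ then 1 else 0) + (if i = i₄ then 1 else 0)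
      - (if i = i₁ then 1 else 0) - (if i = i₂ then 1 else 0) := fun i => rfl
  have hw₂app : ∀ i, w₂ i = u i + (if i = i₅ then 1 else 0) + (if i = i₆ then 1 else 0)
      - (if i = i₁ then 1 else 0) - (if i = i₂ then 1 else 0) := fun i => rfl
  have hA₁ : Adeg e w₁ = Adeg e u := by
    refine hAdeg w₁ i₃ i₄ (fun i => ?_) (incid_swap e h₁ h₂ h₃ h₄ hab hac had hbc hbd hcd)
    rw [hw₁app]
    exact point_adjust ne13 ne14 ne23 ne24 ne12 hu₁ hu₂ i
  have hA₂ : Adeg e w₂ = Adeg e u := by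
    refine hAdeg w₂ i₅ i₆ (fun i => ?_) ?_
    · rw [hw₂app]
      exact point_adjust ne15 ne16 ne25 ne26 ne12 hu₁ hu₂ i
    · intro j
      have := incid_swap e h₁ (h₂.trans (Sym2.eq_swap)) h₅ h₆ hab had hac hbd hbc (Ne.symm hcd) j
      exact this
  have hv₁ : w₁ i₃ = u i₃ + 1 := by
    rw [hw₁app]
    simp [Ne.symm ne13, Ne.symm ne23, ne34]
  have hv₂ : w₂ i₃ = u i₃ := by
    rw [hw₂app]
    simp [Ne.symm ne13, Ne.symm ne23, ne35, ne36]
  have hv₃ : w₂ i₅ = u i₅ + 1 := by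
    rw [hw₂app]
    simp [Ne.symm ne15, Ne.symm ne25, ne56]
  refine ⟨w₁, w₂, ?_, ?_, ?_, hA₁, hA₂⟩
  · intro h
    rw [h, hv₂] at hv₁
    omega
  · intro h
    rw [h] at hv₁
    omega
  · intro h
    rw [h] at hv₃
    omega

end Comb

section Third

variable {n m : ℕ} (e : Fin m → Sym2 (Fin n))

lemma exists_third_aux (he : Function.Injective e)
    (hrange : Set.range e = {s : Sym2 (Fin n) | ¬ s.IsDiag})
    {u v : Fin m →₀ ℕ} (hA : Adeg e u = Adeg e v)
    {i₀ : Fin m} (hlt : v i₀ < u i₀) :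
    ∃ w, w ≠ u ∧ w ≠ v ∧ Adeg e w = Adeg e u := by
  obtain ⟨a, b, hab, hiab⟩ := edge_decomp e hrange i₀
  have ha : a ∈ e i₀ := by rw [hiab]; exact Sym2.mem_mk_left a b
  have hb : b ∈ e i₀ := by rw [hiab]; exact Sym2.mem_mk_right a b
  obtain ⟨j₁, haj₁, hj₁⟩ := exists_opposite e hA ha hlt
  obtain ⟨c, hic⟩ := Sym2.mem_iff_exists.mp haj₁
  have hac : a ≠ c := by
    intro h
    exact edge_nondiag e hrange j₁ (by rw [hic, ← h]; simp)
  have hcb : c ≠ b := by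
    intro h
    have hEq : e j₁ = e i₀ := by rw [hic, hiab, h]
    have := he hEq
    subst this
    omega
  obtain ⟨j₂, hbj₂, hj₂⟩ := exists_opposite e hA hb hlt
  obtain ⟨d, hid⟩ := Sym2.mem_iff_exists.mp hbj₂
  have hbd : b ≠ d := by
    intro h
    exact edge_nondiag e hrange j₂ (by rw [hid, ← h]; simp)
  have hda : d ≠ a := by
    intro h
    have hEq : e j₂ = e i₀ := by rw [hid, hiab, h, Sym2.eq_swap]
    have := he hEq
    subst this
    omega
  have hu₀ : 0 < u i₀ := lt_of_le_of_lt (Nat.zero_le _) hlt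
  by_cases hcd : c = d
  · -- triangle case: blue edges s(a,c), s(b,c); find a red edge at c
    subst hcd
    have hc₁ : c ∈ e j₁ := by rw [hic]; exact Sym2.mem_mk_right a c
    obtain ⟨j₃, hcj₃, hj₃⟩ := exists_opposite e hA.symm hc₁ hj₁
    obtain ⟨x, hix⟩ := Sym2.mem_iff_exists.mp hcj₃
    have hcx : c ≠ x := by
      intro h
      exact edge_nondiag e hrange j₃ (by rw [hix, ← h]; simp)
    have hxa : x ≠ a := by
      intro h
      have hEq : e j₃ = e j₁ := by rw [hix, hic, h, Sym2.eq_swap]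
      have := he hEq
      subst this
      omega
    have hxb : x ≠ b := by
      intro h
      have hEq : e j₃ = e j₂ := by rw [hix, hid, h, Sym2.eq_swap]
      have := he hEq
      subst this
      omega
    have hu₃ : 0 < u j₃ := lt_of_le_of_lt (Nat.zero_le _) hj₃
    obtain ⟨w₁, w₂, hww, hw₁u, hw₂u, hA₁, hA₂⟩ :=
      swap_construct e he hrange hiab hix hab hac (Ne.symm hxa) (Ne.symm hcb) (Ne.symm hxb) hcx hu₀ hu₃
    by_cases h : w₁ = v
    · exact ⟨w₂, hw₂u, by rw [← h]; exact (Ne.symm hww), hA₂⟩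
    · exact ⟨w₁, hw₁u, h, hA₁⟩
  · -- disjoint blue pair s(a,c), s(b,d) in v
    have hv₁ : 0 < v j₁ := lt_of_le_of_lt (Nat.zero_le _) hj₁
    have hv₂ : 0 < v j₂ := lt_of_le_of_lt (Nat.zero_le _) hj₂
    obtain ⟨w₁, w₂, hww, hw₁v, hw₂v, hA₁, hA₂⟩ :=
      swap_construct e he hrange hic hid hac hab (Ne.symm hda) hcb hcd hbd hv₁ hv₂
    rw [← hA] at hA₁ hA₂
    by_cases h : w₁ = u
    · exact ⟨w₂, by rw [← h]; exact (Ne.symm hww), hw₂v, hA₂⟩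
    · exact ⟨w₁, h, hw₁v, hA₁⟩


lemma exists_third (he : Function.Injective e)
    (hrange : Set.range e = {s : Sym2 (Fin n) | ¬ s.IsDiag})
    {u v : Fin m →₀ ℕ} (huv : u ≠ v) (hA : Adeg e u = Adeg e v) :
    ∃ w, w ≠ u ∧ w ≠ v ∧ Adeg e w = Adeg e u := by
  have : ∃ i, u i ≠ v i := by
    by_contra h
    push_neg at h
    exact huv (Finsupp.ext h)
  obtain ⟨i, hi⟩ := this
  rcases lt_or_gt_of_ne hi with h | h
  · obtain ⟨w, hwv, hwu, hAw⟩ := exists_third_aux e he hrange hA.symm h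
    exact ⟨w, hwu, hwv, by rw [hAw, hA]⟩
  · exact exists_third_aux e he hrange hA h

end Third

/-- For the complete graph `K_n`, `n ≥ 4`, the toric ideal `I_{K_n}`
has no indispensable binomials: for every binomial `B ∈ I_{K_n}` there is a system of
binomial generators of `I_{K_n}` containing neither `B` nor `-B`. -/
theorem no_indispensable_binomials_completeGraph {K : Type*} [Field K] [IsAlgClosed K]
    {n m : ℕ} (hn : 4 ≤ n) (e : Fin m → Sym2 (Fin n))
    (he : Function.Injective e) (hrange : Set.range e = {s : Sym2 (Fin n) | ¬ s.IsDiag})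
    (B : MvPolynomial (Fin m) K) (hB : B ∈ toricIdeal K e) (hBbin : IsBinomial B) :
    ∃ S : Set (MvPolynomial (Fin m) K), (∀ p ∈ S, IsBinomial p) ∧
      Ideal.span S = toricIdeal K e ∧ B ∉ S ∧ -B ∉ S := by
  classical
  set S₀ : Set (MvPolynomial (Fin m) K) :=
    {p | (∃ u v : Fin m →₀ ℕ, u ≠ v ∧ Adeg e u = Adeg e v ∧
      p = monomial u 1 - monomial v 1) ∧ p ≠ B ∧ p ≠ -B} with hS₀
  -- every fiber binomial lies in the span of S₀
  have mem_span : ∀ u v : Fin m →₀ ℕ, Adeg e u = Adeg e v →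
      (monomial u (1 : K) - monomial v 1) ∈ Ideal.span S₀ := by
    intro u v hA
    by_cases huv : u = v
    · rw [huv, sub_self]
      exact Ideal.zero_mem _
    by_cases hp : (monomial u (1 : K) - monomial v 1) = B ∨
        (monomial u (1 : K) - monomial v 1) = -B
    · obtain ⟨w, hwu, hwv, hAw⟩ := exists_third e he hrange huv hA
      have hcB : coeff w B = 0 := by
        have hcp : coeff w (monomial u (1 : K) - monomial v 1) = 0 := by
          rw [coeff_sub, coeff_monomial, coeff_monomial,
            if_neg (Ne.symm hwu), if_neg (Ne.symm hwv), sub_zero]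
        rcases hp with hp | hp
        · rw [← hp]; exact hcp
        · have : B = -(monomial u (1 : K) - monomial v 1) := by rw [hp, neg_neg]
          rw [this, coeff_neg, hcp, neg_zero]
      have hsplit : monomial u (1 : K) - monomial v 1 =
          (monomial u 1 - monomial w 1) + (monomial w 1 - monomial v 1) := by ring
      rw [hsplit]
      apply Ideal.add_mem
      · apply Ideal.subset_span
        refine ⟨⟨u, w, Ne.symm hwu, hAw.symm, rfl⟩, ?_, ?_⟩
        · intro h
          have := congrArg (coeff w) h
          rw [coeff_sub, coeff_monomial, coeff_monomial, if_neg (Ne.symm hwu),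
            if_pos rfl, hcB, zero_sub] at this
          exact one_ne_zero (neg_eq_zero.mp this)
        · intro h
          have := congrArg (coeff w) h
          rw [coeff_sub, coeff_monomial, coeff_monomial, if_neg (Ne.symm hwu),
            if_pos rfl, coeff_neg, hcB, neg_zero, zero_sub] at this
          exact one_ne_zero (neg_eq_zero.mp this)
      · apply Ideal.subset_span
        refine ⟨⟨w, v, hwv, by rw [hAw, hA], rfl⟩, ?_, ?_⟩
        · intro h
          have := congrArg (coeff w) h
          rw [coeff_sub, coeff_monomial, coeff_monomial, if_pos rfl,
            if_neg (Ne.symm hwv), hcB, sub_zero] at this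
          exact one_ne_zero this
        · intro h
          have := congrArg (coeff w) h
          rw [coeff_sub, coeff_monomial, coeff_monomial, if_pos rfl,
            if_neg (Ne.symm hwv), coeff_neg, hcB, neg_zero, sub_zero] at this
          exact one_ne_zero this
    · push_neg at hp
      exact Ideal.subset_span ⟨⟨u, v, huv, hA, rfl⟩, hp.1, hp.2⟩
  -- the kernel is contained in the span of S₀
  have ker_span : ∀ (N : ℕ) (f : MvPolynomial (Fin m) K), f.support.card ≤ N →
      toricMap K e f = 0 → f ∈ Ideal.span S₀ := by
    intro N
    induction N with
    | zero =>
      intro f hf _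
      have : f = 0 := by
        rw [← support_eq_empty, ← Finset.card_eq_zero]
        omega
      rw [this]
      exact Ideal.zero_mem _
    | succ N ih =>
      intro f hcard hker
      by_cases hf0 : f = 0
      · rw [hf0]; exact Ideal.zero_mem _
      obtain ⟨u, hu⟩ := support_nonempty.mpr hf0
      have hcoeff := coeff_toricMap e f (Adeg e u)
      rw [hker, coeff_zero] at hcoeff
      have hex : ∃ u' ∈ f.support.filter (fun w => Adeg e w = Adeg e u), u' ≠ u := by
        by_contra hall
        push_neg at hall
        have hsing : f.support.filter (fun w => Adeg e w = Adeg e u) = {u} := by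
          apply Finset.eq_singleton_iff_unique_mem.mpr
          exact ⟨Finset.mem_filter.mpr ⟨hu, rfl⟩, hall⟩
        rw [hsing, Finset.sum_singleton] at hcoeff
        exact (mem_support_iff.mp hu) hcoeff.symm
      obtain ⟨u', hu'mem, hu'⟩ := hex
      obtain ⟨hu'supp, hAu'⟩ := Finset.mem_filter.mp hu'mem
      set c := coeff u f with hc
      set p : MvPolynomial (Fin m) K := monomial u 1 - monomial u' 1 with hpdef
      set g := f - C c * p with hg
      have hpk : toricMap K e p = 0 := by
        rw [hpdef, map_sub, toricMap_monomial, toricMap_monomial, hAu', sub_self]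
      have hgker : toricMap K e g = 0 := by
        rw [hg, map_sub, map_mul, hpk, mul_zero, hker, sub_zero]
      have hgsub : g.support ⊆ f.support.erase u := by
        intro x hx
        rw [Finset.mem_erase]
        have hxne := mem_support_iff.mp hx
        have hcg : coeff x g = coeff x f -
            c * ((if u = x then 1 else 0) - (if u' = x then 1 else 0)) := by
          rw [hg, coeff_sub, coeff_C_mul, hpdef, coeff_sub, coeff_monomial, coeff_monomial]
        constructor
        · rintro rfl
          apply hxne
          rw [hcg, if_pos rfl, if_neg hu', ← hc]
          ring
        · by_contra hxf
          apply hxne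
          rw [hcg]
          have h1 : coeff x f = 0 := notMem_support_iff.mp hxf
          have h2 : u ≠ x := fun h => hxf (h ▸ hu)
          have h3 : u' ≠ x := fun h => hxf (h ▸ hu'supp)
          rw [h1, if_neg h2, if_neg h3]
          ring
      have hgcard : g.support.card ≤ N := by
        have h1 := Finset.card_le_card hgsub
        have h2 := Finset.card_erase_of_mem hu
        have h3 : 1 ≤ f.support.card := Finset.card_pos.mpr ⟨u, hu⟩
        omega
      have hgspan := ih g hgcard hgker
      have hpspan : p ∈ Ideal.span S₀ := mem_span u u' hAu'.symm
      have hfeq : f = g + C c * p := by rw [hg]; ring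
      rw [hfeq]
      exact Ideal.add_mem _ hgspan (Ideal.mul_mem_left _ _ hpspan)
  refine ⟨S₀, ?_, ?_, ?_, ?_⟩
  · rintro q ⟨⟨u, v, -, -, rfl⟩, -, -⟩
    exact ⟨u, v, rfl⟩
  · apply le_antisymm
    · rw [Ideal.span_le]
      rintro q ⟨⟨u, v, -, hA, rfl⟩, -, -⟩
      have : toricMap K e (monomial u (1 : K) - monomial v 1) = 0 := by
        rw [map_sub, toricMap_monomial, toricMap_monomial, hA, sub_self]
      simpa [toricIdeal, RingHom.mem_ker] using this
    · intro f hf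
      have hf0 : toricMap K e f = 0 := by
        simpa [toricIdeal, RingHom.mem_ker] using hf
      exact ker_span f.support.card f le_rfl hf0
  · rintro ⟨-, hB', -⟩
    exact hB' rfl
  · rintro ⟨-, -, hB'⟩
    exact hB' rfl
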